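/- For every π-term P, the normal form function satisfies P ≡ nf(P); in particular every π-term is structurally congruent to a term in normal form. -/

import Mathlib

namespace PiCalcFormal

attribute [local instance] Classical.propDecidable

/-- Action prefixes of the π-calculus: input `a(x)`, output `ā⟨b⟩`, and `τ`. -/
inductive Pre : Type where
  | inp (a x : ℕ)
  | out (a b : ℕ)
  | tau
deriving DecidableEq

mutual
/-- π-calculus processes with guarded replication.  Each restriction carries
an annotation drawn from `A` (take `A := Unit` for plain, unannotated terms). -/
inductive Proc (A : Type) : Type where
  | nil : Proc A
  | nu (x : ℕ) (ann : A) (P : Proc A) : Proc A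
  | par (P Q : Proc A) : Proc A
  | choice (M : Cho A) : Proc A
  | bang (M : Cho A) : Proc A

/-- Choices (guarded sums). -/
inductive Cho (A : Type) : Type where
  | pre (π : Pre) (P : Proc A) : Cho A
  | sum (M N : Cho A) : Cho A
end

variable {A B T L : Type}

/-- Renaming of a single name: `subName x y z` replaces `x` by `y` in `z`. -/
def subName (x y z : ℕ) : ℕ := if z = x then y else z

def Pre.ren (x y : ℕ) : Pre → Pre
  | .inp a z => .inp (subName x y a) (subName x y z)
  | .out a b => .out (subName x y a) (subName x y b)
  | .tau => .tau

mutual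
/-- Free names of a process. -/
def Proc.fn : Proc A → Finset ℕ
  | .nil => ∅
  | .nu x _ P => P.fn.erase x
  | .par P Q => P.fn ∪ Q.fn
  | .choice M => M.fn
  | .bang M => M.fn
/-- Free names of a choice. -/
def Cho.fn : Cho A → Finset ℕ
  | .pre (.inp a z) P => insert a (P.fn.erase z)
  | .pre (.out a b) P => insert a (insert b P.fn)
  | .pre .tau P => P.fn
  | .sum M N => M.fn ∪ N.fn
end

mutual
/-- All bound names (binding occurrences, both restrictions and input binders). -/
def Proc.binders : Proc A → List ℕ
  | .nil => []
  | .nu x _ P => x :: P.binders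
  | .par P Q => P.binders ++ Q.binders
  | .choice M => M.binders
  | .bang M => M.binders
def Cho.binders : Cho A → List ℕ
  | .pre (.inp _ z) P => z :: P.binders
  | .pre _ P => P.binders
  | .sum M N => M.binders ++ N.binders
end

mutual
/-- All annotated restrictions `ν(x : τ)` occurring in a term. -/
def Proc.resAnns : Proc A → List (ℕ × A)
  | .nil => []
  | .nu x a P => (x, a) :: P.resAnns
  | .par P Q => P.resAnns ++ Q.resAnns
  | .choice M => M.resAnns
  | .bang M => M.resAnns
def Cho.resAnns : Cho A → List (ℕ × A)
  | .pre _ P => P.resAnns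
  | .sum M N => M.resAnns ++ N.resAnns
end

mutual
/-- Total renaming of a name `x` to `y` (used for α-conversion with `y` fresh). -/
def Proc.ren (x y : ℕ) : Proc A → Proc A
  | .nil => .nil
  | .nu z a P => .nu (subName x y z) a (P.ren x y)
  | .par P Q => .par (P.ren x y) (Q.ren x y)
  | .choice M => .choice (M.ren x y)
  | .bang M => .bang (M.ren x y)
def Cho.ren (x y : ℕ) : Cho A → Cho A
  | .pre π P => .pre (π.ren x y) (P.ren x y)
  | .sum M N => .sum (M.ren x y) (N.ren x y)
end

mutual
/-- Substitution `P{x ↦ b}` of the name `b` for free occurrences of `x`. -/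
def Proc.subst (x b : ℕ) : Proc A → Proc A
  | .nil => .nil
  | .nu z a P => if z = x then .nu z a P else .nu z a (P.subst x b)
  | .par P Q => .par (P.subst x b) (Q.subst x b)
  | .choice M => .choice (M.subst x b)
  | .bang M => .bang (M.subst x b)
def Cho.subst (x b : ℕ) : Cho A → Cho A
  | .pre (.inp a z) P =>
      .pre (.inp (subName x b a) z) (if z = x then P else P.subst x b)
  | .pre (.out a c) P => .pre (.out (subName x b a) (subName x b c)) (P.subst x b)
  | .pre .tau P => .pre .tau (P.subst x b)
  | .sum M N => .sum (M.subst x b) (N.subst x b)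
end

mutual
/-- Erase the restriction annotations of a term. -/
def Proc.eraseAnn : Proc A → Proc Unit
  | .nil => .nil
  | .nu x _ P => .nu x () P.eraseAnn
  | .par P Q => .par P.eraseAnn Q.eraseAnn
  | .choice M => .choice M.eraseAnn
  | .bang M => .bang M.eraseAnn
def Cho.eraseAnn : Cho A → Cho Unit
  | .pre π P => .pre π P.eraseAnn
  | .sum M N => .sum M.eraseAnn N.eraseAnn
end

/-- `νx₁….νxₙ.P` for a list of annotated restrictions. -/
def nuList : List (ℕ × A) → Proc A → Proc A
  | [], P => P
  | (x, a) :: X, P => .nu x a (nuList X P)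

/-- `A₁ ‖ ⋯ ‖ Aₘ` (the empty product is `0`). -/
def parList : List (Proc A) → Proc A
  | [] => .nil
  | [P] => P
  | P :: Ps => .par P (parList Ps)

/-- Nesting of restrictions `nest_ν`. -/
def Proc.nest : Proc A → ℕ
  | .nil => 0
  | .nu _ _ P => P.nest + 1
  | .par P Q => max P.nest Q.nest
  | .choice _ => 0
  | .bang _ => 0

mutual
/-- Structural congruence on processes: least relation respecting α-conversion,
associativity/commutativity of `+` and `‖` with `0` neutral, the restriction
laws, replication unfolding and scope extrusion.  Annotations are invariant
under α-conversion and replication. -/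
inductive SC : Proc A → Proc A → Prop where
  | refl (P : Proc A) : SC P P
  | symm {P Q : Proc A} : SC P Q → SC Q P
  | trans {P Q R : Proc A} : SC P Q → SC Q R → SC P R
  | nuCong (x : ℕ) (a : A) {P Q : Proc A} : SC P Q → SC (.nu x a P) (.nu x a Q)
  | parCong {P P' Q Q' : Proc A} : SC P P' → SC Q Q' → SC (.par P Q) (.par P' Q')
  | choiceCong {M M' : Cho A} : SCc M M' → SC (.choice M) (.choice M')
  | bangCong {M M' : Cho A} : SCc M M' → SC (.bang M) (.bang M')
  | parComm (P Q : Proc A) : SC (.par P Q) (.par Q P)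
  | parAssoc (P Q R : Proc A) : SC (.par (.par P Q) R) (.par P (.par Q R))
  | parNil (P : Proc A) : SC (.par P .nil) P
  | nuNil (x : ℕ) (a : A) : SC (.nu x a .nil) .nil
  | nuExch (x : ℕ) (a : A) (y : ℕ) (b : A) (P : Proc A) :
      SC (.nu x a (.nu y b P)) (.nu y b (.nu x a P))
  | bangUnfold (M : Cho A) : SC (.bang M) (.par (.choice M) (.bang M))
  | extrude (x : ℕ) (a : A) (P Q : Proc A) :
      x ∉ P.fn → SC (.par P (.nu x a Q)) (.nu x a (.par P Q))
  | alpha (x y : ℕ) (a : A) (P : Proc A) :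
      y ∉ P.fn → y ∉ P.binders → SC (.nu x a P) (.nu y a (P.ren x y))
/-- Structural congruence on choices. -/
inductive SCc : Cho A → Cho A → Prop where
  | refl (M : Cho A) : SCc M M
  | symm {M N : Cho A} : SCc M N → SCc N M
  | trans {M N O : Cho A} : SCc M N → SCc N O → SCc M O
  | preCong (π : Pre) {P Q : Proc A} : SC P Q → SCc (.pre π P) (.pre π Q)
  | sumCong {M M' N N' : Cho A} : SCc M M' → SCc N N' → SCc (.sum M N) (.sum M' N')
  | sumComm (M N : Cho A) : SCc (.sum M N) (.sum N M)
  | sumAssoc (M N O : Cho A) : SCc (.sum (.sum M N) O) (.sum M (.sum N O))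
  | alphaInp (a x y : ℕ) (P : Proc A) :
      y ∉ P.fn → y ∉ P.binders → SCc (.pre (.inp a x) P) (.pre (.inp a y) (P.ren x y))
end

/-- `Summand M π P` holds when `π.P` is one of the summands of the choice `M`
(so that `M ≡ π.P + M'` for the remaining, possibly empty, summands `M'`). -/
inductive Summand : Cho A → Pre → Proc A → Prop where
  | head (π : Pre) (P : Proc A) : Summand (.pre π P) π P
  | left {M : Cho A} (N : Cho A) {π : Pre} {P : Proc A} :
      Summand M π P → Summand (.sum M N) π P
  | right (M : Cho A) {N : Cho A} {π : Pre} {P : Proc A} :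
      Summand N π P → Summand (.sum M N) π P

/-- Reduction relation of the (annotated) π-calculus.
A communication `P → Q` requires `P ≡ νW.(S ‖ R ‖ C)` with
`S = (ā⟨b⟩.νYs.S′)+Ms`, `R = (a(x).νYr.R′)+Mr` and
`Q ≡ νW Ys′ Yr′.(S′ ‖ R′{x↦b} ‖ C)`; the annotations of the restrictions
activated by the transition (`Ys`, `Yr`, resp. `Y`) may be re-chosen, while all
other (in particular all active) annotations are preserved.  For `A := Unit`
this is the ordinary reduction relation. -/
inductive Step : Proc A → Proc A → Prop where
  | comm {P Q : Proc A} (W Ys Yr Ys' Yr' : List (ℕ × A)) (S R : Cho A)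
      (C S' R' : Proc A) (a b x : ℕ) :
      Summand S (.out a b) (nuList Ys S') →
      Summand R (.inp a x) (nuList Yr R') →
      Ys.map Prod.fst = Ys'.map Prod.fst →
      Yr.map Prod.fst = Yr'.map Prod.fst →
      SC P (nuList W (.par (.choice S) (.par (.choice R) C))) →
      SC Q (nuList (W ++ Ys' ++ Yr') (.par S' (.par (R'.subst x b) C))) →
      Step P Q
  | tauStep {P Q : Proc A} (W Y Y' : List (ℕ × A)) (C P' : Proc A) :
      Y.map Prod.fst = Y'.map Prod.fst →
      SC P (nuList W (.par (.choice (.pre .tau (nuList Y P'))) C)) →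
      SC Q (nuList (W ++ Y') (.par P' C)) →
      Step P Q

/-- Reachability: reflexive-transitive closure of reduction. -/
def Reach (P Q : Proc A) : Prop := Relation.ReflTransGen Step P Q

/-- Depth of a term: minimal nesting of restrictions over its congruence class. -/
noncomputable def depth (P : Proc A) : ℕ := sInf {n | ∃ Q, SC P Q ∧ Q.nest = n}

/-- A term is depth-bounded if the depth of all reachable terms is uniformly bounded. -/
def DepthBounded (P : Proc A) : Prop := ∃ k, ∀ Q, Reach P Q → depth Q ≤ k

mutual
/-- Normal forms: `νx₁…xₙ.(A₁ ‖ ⋯ ‖ Aₘ)`, every `Aᵢ` a (possibly replicated)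
choice, with all continuations again in normal form. -/
inductive NFP : Proc A → Prop where
  | mk (X : List (ℕ × A)) (As : List (Proc A)) :
      (∀ A' ∈ As, NFS A') → NFP (nuList X (parList As))
/-- Sequential normal forms: choices or replicated choices. -/
inductive NFS : Proc A → Prop where
  | choice {M : Cho A} : NFC M → NFS (.choice M)
  | bang {M : Cho A} : NFC M → NFS (.bang M)
/-- Normal-form choices. -/
inductive NFC : Cho A → Prop where
  | pre (π : Pre) {P : Proc A} : NFP P → NFC (.pre π P)
  | sum {M N : Cho A} : NFC M → NFC N → NFC (.sum M N)
end

/-- Strip the maximal prefix of top-level restrictions. -/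
def Proc.strip : Proc A → List (ℕ × A) × Proc A
  | .nu x a P => ((x, a) :: P.strip.1, P.strip.2)
  | P => ([], P)

mutual
/-- The normal form function `nf`. -/
def Proc.nf : Proc A → Proc A
  | .nil => .nil
  | .nu x a P => .nu x a P.nf
  | .choice M => .choice M.nf
  | .bang M => .bang M.nf
  | .par P Q =>
    match P.nf, Q.nf with
    | .nil, q => q
    | p, .nil => p
    | p, q => nuList (p.strip.1 ++ q.strip.1) (.par p.strip.2 q.strip.2)
def Cho.nf : Cho A → Cho A
  | .pre π P => .pre π P.nf
  | .sum M N => .sum M.nf N.nf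
end

/-- Name uniqueness (Barendregt) convention: every name is bound at most once
and free and bound names are disjoint. -/
def NameUniq (P : Proc A) : Prop := P.binders.Nodup ∧ ∀ x ∈ P.binders, x ∉ P.fn

/-- A Gödel numbering of plain π-terms. -/
def Pre.encode : Pre → ℕ
  | .inp a x => Nat.pair 0 (Nat.pair a x)
  | .out a b => Nat.pair 1 (Nat.pair a b)
  | .tau => Nat.pair 2 0

mutual
def Proc.encode : Proc Unit → ℕ
  | .nil => Nat.pair 0 0
  | .nu x _ P => Nat.pair 1 (Nat.pair x P.encode)
  | .par P Q => Nat.pair 2 (Nat.pair P.encode Q.encode)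
  | .choice M => Nat.pair 3 M.encode
  | .bang M => Nat.pair 4 M.encode
def Cho.encode : Cho Unit → ℕ
  | .pre π P => Nat.pair 0 (Nat.pair π.encode P.encode)
  | .sum M N => Nat.pair 1 (Nat.pair M.encode N.encode)
end
/-- Finite labelled rose trees. -/
inductive Tree (L : Type) : Type where
  | node (label : L) (children : List (Tree L)) : Tree L

/-- Labelled forests (finite lists of labelled trees, considered up to
isomorphism via `ForestIso`). -/
abbrev Forest (L : Type) := List (Tree L)

def Tree.label : Tree L → L
  | .node l _ => l

def Tree.children : Tree L → List (Tree L)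
  | .node _ cs => cs

/-- `Subtree s t`: `s` occurs as a subtree (node) of `t`. -/
inductive Subtree : Tree L → Tree L → Prop where
  | refl (t : Tree L) : Subtree t t
  | child {s c : Tree L} (l : L) (cs : List (Tree L)) :
      c ∈ cs → Subtree s c → Subtree s (.node l cs)

/-- `u` is a node of the forest `φ`. -/
def NodeOf (u : Tree L) (φ : Forest L) : Prop := ∃ t ∈ φ, Subtree u t

/-- `IsTrace t tr`: `tr` is the sequence of labels along a downward path of
consecutive parent-child nodes starting at the root of `t`. -/
inductive IsTrace : Tree L → List L → Prop where
  | single (l : L) (cs : List (Tree L)) : IsTrace (.node l cs) [l]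
  | cons {c : Tree L} {tr : List L} (l : L) (cs : List (Tree L)) :
      c ∈ cs → IsTrace c tr → IsTrace (.node l cs) (l :: tr)

/-- `tr` is the trace of some path of the forest `φ` (starting at any node). -/
def ForestTrace (φ : Forest L) (tr : List L) : Prop :=
  ∃ t ∈ φ, ∃ s, Subtree s t ∧ IsTrace s tr

mutual
/-- Isomorphism of labelled trees (children are unordered). -/
inductive TreeIso : Tree L → Tree L → Prop where
  | node (l : L) {cs cs' : List (Tree L)} :
      ForestIso cs cs' → TreeIso (.node l cs) (.node l cs')
/-- Isomorphism of labelled forests: a bijection of nodes respecting the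
parent relation and the labelling (permutation of sibling lists). -/
inductive ForestIso : Forest L → Forest L → Prop where
  | nil : ForestIso ([] : Forest L) []
  | cons {t t' : Tree L} {f f' : Forest L} :
      TreeIso t t' → ForestIso f f' → ForestIso (t :: f) (t' :: f')
  | swap (t₁ t₂ : Tree L) (f : Forest L) : ForestIso (t₁ :: t₂ :: f) (t₂ :: t₁ :: f)
  | trans {f g h : Forest L} : ForestIso f g → ForestIso g h → ForestIso f h
end

/-- The forest representation of a term.  Restriction nodes are labelled with
the pair of the restricted name and the image of its annotation under `b`
(for annotated terms, `b` is `Ty.baseOf`; for plain terms take `b := id`);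
leaves are labelled with the active sequential subterms. -/
def Proc.forestB (b : A → T) : Proc A → Forest ((ℕ × T) ⊕ Proc A)
  | .nil => []
  | .nu x a P => [Tree.node (Sum.inl (x, b a)) (P.forestB b)]
  | .par P Q => P.forestB b ++ Q.forestB b
  | .choice M => [Tree.node (Sum.inr (.choice M)) []]
  | .bang M => [Tree.node (Sum.inr (.bang M)) []]

/-- `φ ∈ F⟦P⟧`: the forest `φ` is (isomorphic to) the forest representation
of some term structurally congruent to `P`. -/
def Proc.inForests (b : A → T) (P : Proc A) (φ : Forest ((ℕ × T) ⊕ Proc A)) : Prop :=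
  ∃ Q, SC P Q ∧ ForestIso φ (Q.forestB b)

/-- The restriction height of a forest: the length of the longest path formed
of nodes labelled with names. -/
noncomputable def heightNu (φ : Forest ((ℕ × T) ⊕ B)) : ℕ :=
  sSup {k | ∃ (tr : List ((ℕ × T) ⊕ B)) (xs : List (ℕ × T)),
    ForestTrace φ tr ∧ tr = xs.map Sum.inl ∧ k = xs.length}

/-- A hierarchy: a finite forest `(T, ≺)` of base types, presented by a parent
function whose induced ancestor relation is acyclic. -/
structure BaseForest : Type 1 where
  T : Type
  fin : Fintype T
  parent : T → Option T
  acyclic : ∀ t : T, ¬ Relation.TransGen (fun a b : T => parent b = some a) t t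

/-- The strict (ancestor) order `<` of the hierarchy. -/
def BaseForest.lt (F : BaseForest) : F.T → F.T → Prop :=
  Relation.TransGen (fun a b : F.T => F.parent b = some a)

/-- Types over base types `T`: `τ ::= t | t[τ]`. -/
inductive Ty (T : Type) : Type where
  | base (t : T)
  | chan (t : T) (arg : Ty T)

/-- The base type of a type. -/
def Ty.baseOf : Ty T → T
  | .base t => t
  | .chan t _ => t

/-- `T`-compatibility of a forest: along every trace
`(x₁,t₁) … (xₖ,tₖ) A` ending in a (sequential) leaf label, the base types
satisfy `t₁ < t₂ < ⋯ < tₖ`. -/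
def TCompatF (lt : T → T → Prop) (φ : Forest ((ℕ × T) ⊕ B)) : Prop :=
  ∀ (tr : List ((ℕ × T) ⊕ B)) (xs : List (ℕ × T)) (Aend : B),
    ForestTrace φ tr → tr = xs.map Sum.inl ++ [Sum.inr Aend] →
    List.Chain' (fun p q => lt p.2 q.2) xs

/-- A `T`-annotated term is `T`-compatible if some forest in `F⟦P⟧` is. -/
def TCompatible (F : BaseForest) (P : Proc (Ty F.T)) : Prop :=
  ∃ φ, P.inForests Ty.baseOf φ ∧ TCompatF F.lt φ

mutual
/-- `SubProc Q P`: `Q` is a subterm of the process `P`. -/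
inductive SubProc : Proc A → Proc A → Prop where
  | refl (P : Proc A) : SubProc P P
  | nu (x : ℕ) (a : A) {Q P : Proc A} : SubProc Q P → SubProc Q (.nu x a P)
  | parL {Q P P' : Proc A} : SubProc Q P → SubProc Q (.par P P')
  | parR {Q P P' : Proc A} : SubProc Q P' → SubProc Q (.par P P')
  | choice {Q : Proc A} {M : Cho A} : SubCho Q M → SubProc Q (.choice M)
  | bang {Q : Proc A} {M : Cho A} : SubCho Q M → SubProc Q (.bang M)
/-- `SubCho Q M`: `Q` is a subterm of the choice `M`. -/
inductive SubCho : Proc A → Cho A → Prop where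
  | pre (π : Pre) {Q P : Proc A} : SubProc Q P → SubCho Q (.pre π P)
  | sumL {Q : Proc A} {M N : Cho A} : SubCho Q M → SubCho Q (.sum M N)
  | sumR {Q : Proc A} {M N : Cho A} : SubCho Q N → SubCho Q (.sum M N)
end

/-- A term is `T`-shaped if each of its subterms is `T`-compatible. -/
def TShaped (F : BaseForest) (P : Proc (Ty F.T)) : Prop :=
  ∀ Q, SubProc Q P → TCompatible F Q

/-- A plain π-term is hierarchical if for some finite forest `T` of base types
there is a consistent annotation of its transition system (a lifting of `→` to
annotated terms, preserving the annotations of active restrictions) all of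
whose reachable annotated terms are `T`-compatible. -/
def Hierarchical (P : Proc Unit) : Prop :=
  ∃ (F : BaseForest) (P' : Proc (Ty F.T)) (R : Set (Proc (Ty F.T))),
    P'.eraseAnn = P ∧ P' ∈ R ∧
    (∀ Q' ∈ R, TCompatible F Q') ∧
    (∀ Q' ∈ R, ∀ Q : Proc Unit, Step Q'.eraseAnn Q →
      ∃ Q'' : Proc (Ty F.T), Step Q' Q'' ∧ Q''.eraseAnn = Q ∧ Q'' ∈ R)
/-- The `i`-th parallel component of a normal form `νX.∏ᵢ Aᵢ`. -/
def compAt (As : List (Proc A)) (i : ℕ) : Proc A := As.getD i .nil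

/-- `Aᵢ` is linked to `Aⱼ` in `νX.∏ᵢ Aᵢ`: they share a restricted name of `X`. -/
def Linked (X : List (ℕ × A)) (As : List (Proc A)) (i j : ℕ) : Prop :=
  i < As.length ∧ j < As.length ∧
    ∃ x, (∃ a, (x, a) ∈ X) ∧ x ∈ (compAt As i).fn ∧ x ∈ (compAt As j).fn

/-- The tied-to relation: transitive closure of linked-to. -/
def Tied (X : List (ℕ × A)) (As : List (Proc A)) : ℕ → ℕ → Prop :=
  Relation.TransGen (Linked X As)

/-- A name `y` is tied to `Aᵢ` in `νX.∏ᵢ Aᵢ` if `y ∈ fn(Aⱼ)` for some `j` tied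
to `i`.  For the input-prefixed normal form `a(y).νX.∏ᵢ Aᵢ`, the component
`Aᵢ` is migratable precisely when `y` is tied to `Aᵢ`. -/
def NameTied (X : List (ℕ × A)) (As : List (Proc A)) (y : ℕ) (i : ℕ) : Prop :=
  ∃ j, y ∈ (compAt As j).fn ∧ Tied X As j i

/-- Type environments: partial maps from names to types. -/
abbrev Env (T : Type) := ℕ → Option (Ty T)

/-- Extension `Γ, X` of an environment by a list of type assignments. -/
def Env.extend (Γ : Env T) (X : List (ℕ × Ty T)) : Env T := fun y =>
  match X.find? (fun p => p.1 == y) with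
  | some p => some p.2
  | none => Γ y

/-- `Γ(s) = {Γ(y) | y ∈ s ∩ dom Γ}`. -/
def Env.image (Γ : Env T) (s : Finset ℕ) : Set (Ty T) := {τ | ∃ y ∈ s, Γ y = some τ}

/-- Domain of an environment. -/
def Env.dom (Γ : Env T) : Set ℕ := {y | (Γ y).isSome}

/-- Union of two environments (with disjoint domains; left-biased). -/
def Env.union (Γ Γ' : Env T) : Env T := fun y =>
  match Γ y with
  | some τ => some τ
  | none => Γ' y

mutual
/-- The type system for hierarchical terms: judgement `Γ ⊢_T P` for annotated
normal forms (rule Par). -/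
inductive TypP (F : BaseForest) : Env F.T → Proc (Ty F.T) → Prop where
  | par (Γ : Env F.T) (X : List (ℕ × Ty F.T)) (As : List (Proc (Ty F.T)))
      (hseq : ∀ A' ∈ As, TypS F (Γ.extend X) A')
      (hord : ∀ p ∈ X, ∀ i, NameTied X As p.1 i →
        ∀ τ ∈ Γ.image (compAt As i).fn, F.lt τ.baseOf p.2.baseOf) :
      TypP F Γ (nuList X (parList As))
/-- Typing of sequential terms (rules Choice and Repl). -/
inductive TypS (F : BaseForest) : Env F.T → Proc (Ty F.T) → Prop where
  | choice {Γ : Env F.T} {M : Cho (Ty F.T)} (hM : TypC F Γ M) : TypS F Γ (.choice M)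
  | bang {Γ : Env F.T} {M : Cho (Ty F.T)} (hM : TypC F Γ M) : TypS F Γ (.bang M)
/-- Typing of choices (rules Sum, Tau, Out and In). -/
inductive TypC (F : BaseForest) : Env F.T → Cho (Ty F.T) → Prop where
  | sum {Γ : Env F.T} {M N : Cho (Ty F.T)} (hM : TypC F Γ M) (hN : TypC F Γ N) :
      TypC F Γ (.sum M N)
  | tau {Γ : Env F.T} {P : Proc (Ty F.T)} (hP : TypP F Γ P) : TypC F Γ (.pre .tau P)
  | out {Γ : Env F.T} {a b : ℕ} {ta : F.T} {τb : Ty F.T} {Q : Proc (Ty F.T)}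
      (ha : Γ a = some (.chan ta τb)) (hb : Γ b = some τb) (hQ : TypP F Γ Q) :
      TypC F Γ (.pre (.out a b) Q)
  | inp (Γ : Env F.T) (a x : ℕ) (ta : F.T) (τx : Ty F.T)
      (X : List (ℕ × Ty F.T)) (As : List (Proc (Ty F.T)))
      (ha : Γ a = some (.chan ta τx))
      (hcont : TypP F (Γ.extend [(x, τx)]) (nuList X (parList As)))
      (hmig : F.lt τx.baseOf ta ∨
        ∀ i, NameTied X As x i →
          ∀ τ ∈ Γ.image ((compAt As i).fn \ {a}), F.lt τ.baseOf ta) :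
      TypC F Γ (.pre (.inp a x) (nuList X (parList As)))
end

/-- `Γ` is `P`-safe: for every free name `x` of `P` (in the domain of `Γ`) and
every restriction annotation `(y : τ)` occurring in `P`,
`base(Γ(x)) < base(τ)`. -/
def PSafe (F : BaseForest) (Γ : Env F.T) (P : Proc (Ty F.T)) : Prop :=
  ∀ x ∈ P.fn, ∀ τx, Γ x = some τx → ∀ p ∈ P.resAnns, F.lt τx.baseOf p.2.baseOf

/-- Auxiliary, fuel-indexed version of `Φ_T` (the fuel `|X|` always suffices). -/
noncomputable def PhiAux (F : BaseForest) :
    ℕ → List (ℕ × Ty F.T) → List (Proc (Ty F.T)) → Forest ((ℕ × F.T) ⊕ Proc (Ty F.T))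
  | _, [], As => As.map fun A' => Tree.node (Sum.inr A') []
  | 0, _ :: _, As => As.map fun A' => Tree.node (Sum.inr A') []
  | n + 1, p0 :: X', As =>
      let X := p0 :: X'
      let mins := X.filter fun p => decide (∀ q ∈ X, ¬ F.lt q.2.baseOf p.2.baseOf)
      let Ix : ℕ × Ty F.T → List ℕ := fun p =>
        (List.range As.length).filter fun i => decide (NameTied X As p.1 i)
      let Yx : ℕ × Ty F.T → List (ℕ × Ty F.T) := fun p =>
        X.filter fun q => decide ((∃ i ∈ Ix p, q.1 ∈ (compAt As i).fn) ∧ q ∉ mins)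
      let Z := X.filter fun q => decide (q ∉ mins ∧ ∀ p ∈ mins, q ∉ Yx p)
      let R := (List.range As.length).filter fun i => decide (∀ p ∈ mins, i ∉ Ix p)
      (mins.map fun p =>
        Tree.node (Sum.inl (p.1, p.2.baseOf))
          (PhiAux F n (Yx p) ((Ix p).map fun i => compAt As i)))
        ++ PhiAux F n Z (R.map fun i => compAt As i)

/-- The canonical `T`-compatible forest candidate `Φ_T` of a normal form
`νX.∏ᵢ Aᵢ`. -/
noncomputable def Phi (F : BaseForest) (X : List (ℕ × Ty F.T))
    (As : List (Proc (Ty F.T))) : Forest ((ℕ × F.T) ⊕ Proc (Ty F.T)) :=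
  PhiAux F X.length X As
/-- All labels of the nodes of a tree. -/
def Tree.labels : Tree L → List L
  | .node l cs => l :: (cs.attach.map fun c => Tree.labels c.1).flatten
decreasing_by
  have := List.sizeOf_lt_of_mem c.2
  simp only [Tree.node.sizeOf_spec]
  omega

/-- All labels of the nodes of a forest. -/
def forestLabels (φ : Forest L) : List L := (φ.map Tree.labels).flatten

/-- The name labels of a forest (with multiplicity). -/
def nameLabels (φ : Forest ((ℕ × T) ⊕ B)) : List ℕ :=
  (forestLabels φ).filterMap fun l =>
    match l with
    | .inl p => some p.1
    | .inr _ => none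

/-- The sequential-term labels of a forest (with multiplicity). -/
def seqLabels (φ : Forest ((ℕ × T) ⊕ B)) : List B :=
  (forestLabels φ).filterMap fun l =>
    match l with
    | .inl _ => none
    | .inr A' => some A'

/-! `nf` only regroups: it pulls the restrictions of both components of a parallel composition
to the front, which is an instance of scope extrusion as soon as no restriction of one component
captures a free name of the other. Under the name-uniqueness convention this is guaranteed, and
the convention passes from `P` to `nf P` because `nf` creates neither free nor bound names (the
bound names are only permuted). What `nf` leaves under its restrictions is a tree of parallel
compositions of sequential terms and `0`s, which flattens by the monoid laws of `‖` to a genuine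
normal form `νX.(A₁ ‖ ⋯ ‖ Aₘ)`. -/

lemma nuList_append (X Y : List (ℕ × A)) (P : Proc A) :
    nuList (X ++ Y) P = nuList X (nuList Y P) := by
  induction X with
  | nil => rfl
  | cons p X ih => simp [nuList, ih]

lemma binders_nuList (X : List (ℕ × A)) (P : Proc A) :
    (nuList X P).binders = X.map Prod.fst ++ P.binders := by
  induction X with
  | nil => rfl
  | cons p X ih => simp [nuList, Proc.binders, ih]

lemma mem_fn_nuList {x : ℕ} (X : List (ℕ × A)) (P : Proc A) :
    x ∈ (nuList X P).fn ↔ x ∈ P.fn ∧ x ∉ X.map Prod.fst := by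
  induction X with
  | nil => simp [nuList]
  | cons p X ih =>
    simp only [nuList, Proc.fn, Finset.mem_erase, ih, List.map_cons, List.mem_cons]
    tauto

lemma Proc.nuList_strip : ∀ P : Proc A, nuList P.strip.1 P.strip.2 = P
  | .nil | .par _ _ | .choice _ | .bang _ => rfl
  | .nu x a P => by simp [Proc.strip, nuList, P.nuList_strip]

lemma Proc.strip_nuList_par (X : List (ℕ × A)) (P Q : Proc A) :
    (nuList X (.par P Q)).strip = (X, .par P Q) := by
  induction X with
  | nil => rfl
  | cons p X ih => simp [nuList, Proc.strip, ih]

lemma Proc.mem_binders_of_mem_strip {P : Proc A} {x : ℕ} (hx : x ∈ P.strip.1.map Prod.fst) :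
    x ∈ P.binders := by
  rw [← P.nuList_strip, binders_nuList]
  exact List.mem_append_left _ hx

lemma Proc.nf_par (P Q : Proc A) :
    (Proc.par P Q).nf =
      if P.nf = .nil then Q.nf
      else if Q.nf = .nil then P.nf
      else nuList (P.nf.strip.1 ++ Q.nf.strip.1) (.par P.nf.strip.2 Q.nf.strip.2) := by
  rcases hp : P.nf <;> rcases hq : Q.nf <;> simp [Proc.nf, hp, hq]

lemma SC.nuListCong (X : List (ℕ × A)) {P Q : Proc A} (h : SC P Q) :
    SC (nuList X P) (nuList X Q) := by
  induction X with
  | nil => exact h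
  | cons p X ih => exact SC.nuCong _ _ ih

lemma SC.extrudeList (X : List (ℕ × A)) {P Q : Proc A}
    (h : ∀ x ∈ X.map Prod.fst, x ∉ P.fn) :
    SC (.par P (nuList X Q)) (nuList X (.par P Q)) := by
  induction X with
  | nil => exact SC.refl _
  | cons p X ih =>
    simp only [List.map_cons, List.mem_cons, forall_eq_or_imp] at h
    exact (SC.extrude _ _ _ _ h.1).trans (SC.nuCong _ _ (ih h.2))

lemma SC.par_nuList {Xp Xq : List (ℕ × A)} {Np Nq : Proc A}
    (hpq : ∀ x ∈ Xp.map Prod.fst, x ∉ (nuList Xq Nq).fn)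
    (hqp : ∀ x ∈ Xq.map Prod.fst, x ∉ (nuList Xp Np).fn)
    (hdisj : ∀ x ∈ Xq.map Prod.fst, x ∉ Xp.map Prod.fst) :
    SC (.par (nuList Xp Np) (nuList Xq Nq)) (nuList (Xp ++ Xq) (.par Np Nq)) := by
  have hq : ∀ x ∈ Xq.map Prod.fst, x ∉ Np.fn := fun x hx hNp =>
    hqp x hx ((mem_fn_nuList Xp Np).2 ⟨hNp, hdisj x hx⟩)
  rw [nuList_append]
  refine (SC.parComm _ _).trans ((SC.extrudeList Xp hpq).trans (SC.nuListCong Xp ?_))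
  exact (SC.parComm _ _).trans (SC.extrudeList Xq hq)

lemma SC.parList_cons (P : Proc A) (Ps : List (Proc A)) :
    SC (.par P (parList Ps)) (parList (P :: Ps)) := by
  cases Ps with
  | nil => exact SC.parNil _
  | cons Q Ps => exact SC.refl _

lemma SC.parList_append (As Bs : List (Proc A)) :
    SC (.par (parList As) (parList Bs)) (parList (As ++ Bs)) := by
  induction As with
  | nil => exact (SC.parComm _ _).trans (SC.parNil _)
  | cons P As ih =>
    refine (SC.parCong (SC.parList_cons P As).symm (SC.refl _)).trans ((SC.parAssoc _ _ _).trans ?_)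
    exact (SC.parCong (SC.refl P) ih).trans (SC.parList_cons _ _)

lemma NameUniq.of_subperm {P P' : Proc A} (h : NameUniq P) (hb : P'.binders.Subperm P.binders)
    (hfn : ∀ x ∈ P'.binders, x ∈ P'.fn → x ∈ P.fn) : NameUniq P' := by
  refine ⟨?_, fun x hx hxf => h.2 x (hb.subset hx) (hfn x hx hxf)⟩
  obtain ⟨l, hperm, hsub⟩ := hb
  exact hperm.nodup_iff.1 (h.1.sublist hsub)

lemma NameUniq.nu {x : ℕ} {a : A} {P : Proc A} (h : NameUniq (.nu x a P)) : NameUniq P :=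
  h.of_subperm (List.sublist_cons_self x _).subperm fun _ hy hyf =>
    Finset.mem_erase.2 ⟨fun hyx => (List.nodup_cons.1 h.1).1 (hyx ▸ hy), hyf⟩

lemma NameUniq.par_left {P Q : Proc A} (h : NameUniq (.par P Q)) : NameUniq P :=
  h.of_subperm (List.sublist_append_left _ _).subperm fun _ _ hf => Finset.mem_union_left _ hf

lemma NameUniq.par_right {P Q : Proc A} (h : NameUniq (.par P Q)) : NameUniq Q :=
  h.of_subperm (List.sublist_append_right _ _).subperm fun _ _ hf => Finset.mem_union_right _ hf

lemma NameUniq.pre {π : Pre} {P : Proc A} (h : NameUniq (.choice (.pre π P))) : NameUniq P := by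
  cases π with
  | inp a z =>
    refine h.of_subperm (List.sublist_cons_self z _).subperm fun y hy hyf => ?_
    have hyz : y ≠ z := fun hyz => (List.nodup_cons.1 h.1).1 (hyz ▸ hy)
    exact Finset.mem_insert_of_mem (Finset.mem_erase.2 ⟨hyz, hyf⟩)
  | out a b =>
    exact h.of_subperm (List.Sublist.refl _).subperm fun _ _ hf =>
      Finset.mem_insert_of_mem (Finset.mem_insert_of_mem hf)
  | tau => exact h

lemma NameUniq.sum_left {M N : Cho A} (h : NameUniq (.choice (.sum M N))) :
    NameUniq (.choice M) :=
  h.of_subperm (List.sublist_append_left _ _).subperm fun _ _ hf => Finset.mem_union_left _ hf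

lemma NameUniq.sum_right {M N : Cho A} (h : NameUniq (.choice (.sum M N))) :
    NameUniq (.choice N) :=
  h.of_subperm (List.sublist_append_right _ _).subperm fun _ _ hf => Finset.mem_union_right _ hf

lemma SC.par_strip {P Q : Proc A} (h : NameUniq (.par P Q)) :
    SC (.par P Q) (nuList (P.strip.1 ++ Q.strip.1) (.par P.strip.2 Q.strip.2)) := by
  have hfn := h.2
  simp only [Proc.binders, Proc.fn, List.mem_append, Finset.mem_union] at hfn
  have hb := List.nodup_append.1 h.1
  conv_lhs => rw [← P.nuList_strip, ← Q.nuList_strip]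
  refine SC.par_nuList ?_ ?_ ?_ <;> intro x hx
  · rw [Q.nuList_strip]
    exact fun hxQ => hfn x (.inl (Proc.mem_binders_of_mem_strip hx)) (.inr hxQ)
  · rw [P.nuList_strip]
    exact fun hxP => hfn x (.inr (Proc.mem_binders_of_mem_strip hx)) (.inl hxP)
  · exact fun hxP => hb.2.2 x (Proc.mem_binders_of_mem_strip hxP) x
      (Proc.mem_binders_of_mem_strip hx) rfl

mutual
lemma Proc.fn_nf_subset : ∀ P : Proc A, P.nf.fn ⊆ P.fn
  | .nil => subset_rfl
  | .nu x _ P => Finset.erase_subset_erase x P.fn_nf_subset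
  | .choice M | .bang M => M.fn_nf_subset
  | .par P Q => by
    have hP := P.fn_nf_subset
    have hQ := Q.fn_nf_subset
    rw [Proc.nf_par]
    split_ifs with hp hq
    · exact hQ.trans Finset.subset_union_right
    · exact hP.trans Finset.subset_union_left
    · rw [← P.nf.nuList_strip] at hP
      rw [← Q.nf.nuList_strip] at hQ
      intro x hx
      simp only [Finset.subset_iff, mem_fn_nuList, Proc.fn, List.map_append, List.mem_append,
        Finset.mem_union, and_imp] at hx hP hQ ⊢
      rcases hx with ⟨hx | hx, hxX⟩
      · exact .inl (hP hx fun h => hxX (.inl h))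
      · exact .inr (hQ hx fun h => hxX (.inr h))
lemma Cho.fn_nf_subset : ∀ M : Cho A, M.nf.fn ⊆ M.fn
  | .pre (.inp a z) P => Finset.insert_subset_insert a (Finset.erase_subset_erase z P.fn_nf_subset)
  | .pre (.out a b) P =>
    Finset.insert_subset_insert a (Finset.insert_subset_insert b P.fn_nf_subset)
  | .pre .tau P => P.fn_nf_subset
  | .sum M N => Finset.union_subset_union M.fn_nf_subset N.fn_nf_subset
end

mutual
lemma Proc.binders_nf_perm : ∀ P : Proc A, P.nf.binders.Perm P.binders
  | .nil => List.Perm.refl _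
  | .nu x _ P => P.binders_nf_perm.cons x
  | .choice M | .bang M => M.binders_nf_perm
  | .par P Q => by
    have hP := P.binders_nf_perm
    have hQ := Q.binders_nf_perm
    rw [Proc.nf_par]
    split_ifs with hp hq
    · have hP0 : P.binders = [] := by simpa [hp, Proc.binders] using hP
      simpa [Proc.binders, hP0] using hQ
    · have hQ0 : Q.binders = [] := by simpa [hq, Proc.binders] using hQ
      simpa [Proc.binders, hQ0] using hP
    · rw [← P.nf.nuList_strip, binders_nuList] at hP
      rw [← Q.nf.nuList_strip, binders_nuList] at hQ
      simp only [binders_nuList, Proc.binders, List.map_append]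
      refine List.Perm.trans ?_ (hP.append hQ)
      simp only [List.append_assoc]
      exact (List.perm_append_comm_assoc _ _ _).append_left _
lemma Cho.binders_nf_perm : ∀ M : Cho A, M.nf.binders.Perm M.binders
  | .pre (.inp _ z) P => P.binders_nf_perm.cons z
  | .pre (.out _ _) P | .pre .tau P => P.binders_nf_perm
  | .sum M N => M.binders_nf_perm.append N.binders_nf_perm
end

lemma NameUniq.par_nf {P Q : Proc A} (h : NameUniq (.par P Q)) : NameUniq (.par P.nf Q.nf) :=
  h.of_subperm (P.binders_nf_perm.append Q.binders_nf_perm).subperm fun _ _ hx =>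
    Finset.union_subset_union P.fn_nf_subset Q.fn_nf_subset hx

mutual
theorem Proc.sc_nf_of_nameUniq : ∀ P : Proc A, NameUniq P → SC P P.nf
  | .nil, _ => SC.refl _
  | .nu x a P, h => SC.nuCong x a (P.sc_nf_of_nameUniq h.nu)
  | .choice M, h => SC.choiceCong (M.scc_nf_of_nameUniq h)
  | .bang M, h => SC.bangCong (M.scc_nf_of_nameUniq h)
  | .par P Q, h => by
    have hPQ : SC (.par P Q) (.par P.nf Q.nf) :=
      SC.parCong (P.sc_nf_of_nameUniq h.par_left) (Q.sc_nf_of_nameUniq h.par_right)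
    rw [Proc.nf_par]
    split_ifs with hp hq
    · rw [hp] at hPQ
      exact hPQ.trans ((SC.parComm _ _).trans (SC.parNil _))
    · rw [hq] at hPQ
      exact hPQ.trans (SC.parNil _)
    · exact hPQ.trans (SC.par_strip h.par_nf)
theorem Cho.scc_nf_of_nameUniq : ∀ M : Cho A, NameUniq (.choice M) → SCc M M.nf
  | .pre π P, h => SCc.preCong π (P.sc_nf_of_nameUniq h.pre)
  | .sum M N, h => SCc.sumCong (M.scc_nf_of_nameUniq h.sum_left) (N.scc_nf_of_nameUniq h.sum_right)
end

lemma SC.nuList_strip {P N : Proc A} (h : SC P.strip.2 N) : SC P (nuList P.strip.1 N) := by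
  conv_lhs => rw [← P.nuList_strip]
  exact SC.nuListCong _ h

mutual
theorem Proc.exists_sc_parList_nf_strip : ∀ P : Proc A,
    ∃ As : List (Proc A), (∀ A' ∈ As, NFS A') ∧ SC P.nf.strip.2 (parList As)
  | .nil => ⟨[], by simp, SC.refl _⟩
  | .nu _ _ P => P.exists_sc_parList_nf_strip
  | .choice M => by
    obtain ⟨M', hM', hsc⟩ := M.exists_scc_nfc_nf
    exact ⟨[.choice M'], by simpa using NFS.choice hM', SC.choiceCong hsc⟩
  | .bang M => by
    obtain ⟨M', hM', hsc⟩ := M.exists_scc_nfc_nf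
    exact ⟨[.bang M'], by simpa using NFS.bang hM', SC.bangCong hsc⟩
  | .par P Q => by
    obtain ⟨As, hAs, hP⟩ := P.exists_sc_parList_nf_strip
    obtain ⟨Bs, hBs, hQ⟩ := Q.exists_sc_parList_nf_strip
    rw [Proc.nf_par]
    split_ifs with hp hq
    · exact ⟨Bs, hBs, hQ⟩
    · exact ⟨As, hAs, hP⟩
    · rw [Proc.strip_nuList_par]
      refine ⟨As ++ Bs, fun A' hA' => ?_, (SC.parCong hP hQ).trans (SC.parList_append As Bs)⟩
      rcases List.mem_append.1 hA' with hA' | hA'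
      exacts [hAs A' hA', hBs A' hA']
theorem Cho.exists_scc_nfc_nf : ∀ M : Cho A, ∃ M' : Cho A, NFC M' ∧ SCc M.nf M'
  | .pre π P => by
    obtain ⟨As, hAs, hsc⟩ := P.exists_sc_parList_nf_strip
    exact ⟨.pre π (nuList P.nf.strip.1 (parList As)), NFC.pre π (NFP.mk _ As hAs),
      SCc.preCong π (SC.nuList_strip hsc)⟩
  | .sum M N => by
    obtain ⟨M', hM', hscM⟩ := M.exists_scc_nfc_nf
    obtain ⟨N', hN', hscN⟩ := N.exists_scc_nfc_nf
    exact ⟨.sum M' N', NFC.sum hM' hN', SCc.sumCong hscM hscN⟩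
end

theorem Proc.exists_nfp_sc_nf (P : Proc A) : ∃ Q, NFP Q ∧ SC P.nf Q := by
  obtain ⟨As, hAs, hsc⟩ := P.exists_sc_parList_nf_strip
  exact ⟨_, NFP.mk _ As hAs, SC.nuList_strip hsc⟩

/-- For every π-term `P` (satisfying the standing
name-uniqueness convention), `P ≡ nf(P)`; in particular every π-term is
structurally congruent to a term in normal form. -/
theorem sc_nf (P : Proc Unit) (h : NameUniq P) :
    SC P P.nf ∧ ∃ Q, NFP Q ∧ SC P Q := by
  have hnf : SC P P.nf := P.sc_nf_of_nameUniq h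
  obtain ⟨Q, hQ, hsc⟩ := P.exists_nfp_sc_nf
  exact ⟨hnf, Q, hQ, hnf.trans hsc⟩

end PiCalcFormal
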